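/- arXiv:1002.1016 — 2 statements merged into one kernel-verified Lean document; each statement's English description precedes it below -/
import Mathlib

section
/- In the Manhattan MTM on the N×N grid, the number of one-corner Manhattan paths that start at (i', j') and visit (i, j) is: 2N − i − j if i' < i and j' < j; i + j + 2 if i' > i and j' > j; N + 1 − i + j if i' < i and j' > j; N + 1 + i − j if i' > i and j' < j; N² − Nj if i' = i, j' < j; N² − Ni if i' < i, j' = j; N + Nj if i' = i, j' > j; N + Ni if i' > i, j' = j; and 2N² − 2N + 1 if (i', j') = (i, j). -/
/-!
A one-corner path is determined by its destination `w` and its corner choice, and the two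
choices give the same path exactly when `w` shares a coordinate with the source `u`. Hence
`η N u v` is the number of `w` whose horizontal-first path visits `v`, plus the same count for
vertical-first paths, minus the number of `w` sharing a coordinate with `u` whose (unique) path
visits `v`. Apart from the cross of `2N - 1` destinations through `v = u`, each count is a
product of one-dimensional counts of the endpoints `c < N` for which the segment from `b` to `c`
contains `a`: there are `N - a`, `a + 1` or `N` of them according as `b < a`, `a < b` or `a = b`.
-/

open Finset

/-- The horizontal-then-vertical one-corner Manhattan path from `u` to `w`,
as its set of grid points. -/
def pathHV (u w : ℕ × ℕ) : Finset (ℕ × ℕ) :=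
  ((Finset.Icc (min u.1 w.1) (max u.1 w.1)).image fun x => (x, u.2)) ∪
    ((Finset.Icc (min u.2 w.2) (max u.2 w.2)).image fun y => (w.1, y))

/-- The vertical-then-horizontal one-corner Manhattan path from `u` to `w`,
as its set of grid points. -/
def pathVH (u w : ℕ × ℕ) : Finset (ℕ × ℕ) :=
  ((Finset.Icc (min u.2 w.2) (max u.2 w.2)).image fun y => (u.1, y)) ∪
    ((Finset.Icc (min u.1 w.1) (max u.1 w.1)).image fun x => (x, w.2))

/-- The set of one-corner Manhattan paths starting at `u` with destination in the
`N × N` grid (the two corner choices coincide when a coordinate is shared). -/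
def manhattanPaths (N : ℕ) (u : ℕ × ℕ) : Finset (Finset (ℕ × ℕ)) :=
  ((Finset.range N ×ˢ Finset.range N).image (pathHV u)) ∪
    ((Finset.range N ×ˢ Finset.range N).image (pathVH u))

/-- `η(u, v)`: the number of one-corner Manhattan paths starting at `u` that visit `v`. -/
def η (N : ℕ) (u v : ℕ × ℕ) : ℕ :=
  ((manhattanPaths N u).filter fun P => v ∈ P).card

lemma mem_pathHV {u w v : ℕ × ℕ} :
    v ∈ pathHV u w ↔ v.1 ∈ uIcc u.1 w.1 ∧ v.2 = u.2 ∨ v.1 = w.1 ∧ v.2 ∈ uIcc u.2 w.2 := by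
  obtain ⟨a, b⟩ := v
  simp only [pathHV, mem_union, mem_image, mem_Icc, Prod.mk.injEq]
  constructor
  · rintro (⟨x, hx, rfl, rfl⟩ | ⟨y, hy, rfl, rfl⟩)
    · exact Or.inl ⟨mem_Icc.2 hx, rfl⟩
    · exact Or.inr ⟨rfl, mem_Icc.2 hy⟩
  · rintro (⟨ha, rfl⟩ | ⟨rfl, hb⟩)
    · exact Or.inl ⟨a, mem_Icc.1 ha, rfl, rfl⟩
    · exact Or.inr ⟨b, mem_Icc.1 hb, rfl, rfl⟩

lemma pathVH_eq_image_swap (u w : ℕ × ℕ) :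
    pathVH u w = (pathHV u.swap w.swap).image Prod.swap := by
  rw [pathVH, pathHV, image_union, image_image, image_image]
  rfl

lemma mem_pathVH {u w v : ℕ × ℕ} : v ∈ pathVH u w ↔ v.swap ∈ pathHV u.swap w.swap := by
  conv_lhs => rw [pathVH_eq_image_swap, ← Prod.swap_swap v]
  exact Prod.swap_injective.mem_finset_image

lemma image_fst_pathHV (u w : ℕ × ℕ) : (pathHV u w).image Prod.fst = uIcc u.1 w.1 := by
  ext a
  simp only [mem_image, mem_pathHV]
  constructor
  · rintro ⟨v, ⟨hv, -⟩ | ⟨hv, -⟩, rfl⟩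
    exacts [hv, hv ▸ right_mem_uIcc]
  · exact fun ha => ⟨(a, u.2), Or.inl ⟨ha, rfl⟩, rfl⟩

lemma image_snd_pathHV (u w : ℕ × ℕ) : (pathHV u w).image Prod.snd = uIcc u.2 w.2 := by
  ext b
  simp only [mem_image, mem_pathHV]
  constructor
  · rintro ⟨v, ⟨-, hv⟩ | ⟨-, hv⟩, rfl⟩
    exacts [hv ▸ left_mem_uIcc, hv]
  · exact fun hb => ⟨(w.1, b), Or.inr ⟨rfl, hb⟩, rfl⟩

lemma image_fst_pathVH (u w : ℕ × ℕ) : (pathVH u w).image Prod.fst = uIcc u.1 w.1 := by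
  rw [pathVH_eq_image_swap, image_image, Function.comp_def]
  simp only [Prod.fst_swap]
  exact image_snd_pathHV _ _

lemma image_snd_pathVH (u w : ℕ × ℕ) : (pathVH u w).image Prod.snd = uIcc u.2 w.2 := by
  rw [pathVH_eq_image_swap, image_image, Function.comp_def]
  simp only [Prod.snd_swap]
  exact image_fst_pathHV _ _

lemma eq_of_pathHV_eq_pathVH {u w w' : ℕ × ℕ} (h : pathHV u w = pathVH u w') : w = w' :=
  Prod.ext (uIcc_injective_left _ (by rw [← image_fst_pathHV u w, h, image_fst_pathVH]))
    (uIcc_injective_left _ (by rw [← image_snd_pathHV u w, h, image_snd_pathVH]))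

lemma pathHV_injective (u : ℕ × ℕ) : Function.Injective (pathHV u) := fun w _ h =>
  Prod.ext (uIcc_injective_left _ (by rw [← image_fst_pathHV u w, h, image_fst_pathHV]))
    (uIcc_injective_left _ (by rw [← image_snd_pathHV u w, h, image_snd_pathHV]))

lemma pathVH_injective (u : ℕ × ℕ) : Function.Injective (pathVH u) := fun w _ h =>
  Prod.ext (uIcc_injective_left _ (by rw [← image_fst_pathVH u w, h, image_fst_pathVH]))
    (uIcc_injective_left _ (by rw [← image_snd_pathVH u w, h, image_snd_pathVH]))

lemma pathHV_eq_pathVH_iff {u w : ℕ × ℕ} : pathHV u w = pathVH u w ↔ u.1 = w.1 ∨ u.2 = w.2 := by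
  constructor
  · intro h
    have hcorner : (w.1, u.2) ∈ pathVH u w := h ▸ mem_pathHV.2 (Or.inl ⟨right_mem_uIcc, rfl⟩)
    simp only [mem_pathVH, mem_pathHV, Prod.swap_prod_mk, Prod.fst_swap, Prod.snd_swap,
      mem_uIcc'] at hcorner
    omega
  · intro h
    ext v
    simp only [mem_pathVH, mem_pathHV, Prod.fst_swap, Prod.snd_swap, mem_uIcc']
    omega

lemma η_add_card_shared (N : ℕ) (u v : ℕ × ℕ) :
    η N u v + #{w ∈ range N ×ˢ range N | (u.1 = w.1 ∨ u.2 = w.2) ∧ v ∈ pathHV u w} =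
      #{w ∈ range N ×ˢ range N | v ∈ pathHV u w} +
        #{w ∈ range N ×ˢ range N | v ∈ pathVH u w} := by
  set G := range N ×ˢ range N
  have hinter : G.image (pathHV u) ∩ G.image (pathVH u) =
      {w ∈ G | u.1 = w.1 ∨ u.2 = w.2}.image (pathHV u) := by
    ext P
    simp only [mem_inter, mem_image, mem_filter]
    constructor
    · rintro ⟨⟨w, hw, rfl⟩, w', -, h⟩
      obtain rfl := eq_of_pathHV_eq_pathVH h.symm
      exact ⟨w, ⟨hw, pathHV_eq_pathVH_iff.1 h.symm⟩, rfl⟩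
    · rintro ⟨w, ⟨hw, hshared⟩, rfl⟩
      exact ⟨⟨w, hw, rfl⟩, w, hw, (pathHV_eq_pathVH_iff.2 hshared).symm⟩
  have hHV : #{P ∈ G.image (pathHV u) | v ∈ P} = #{w ∈ G | v ∈ pathHV u w} := by
    rw [filter_image, card_image_of_injective _ (pathHV_injective u)]
  have hVH : #{P ∈ G.image (pathVH u) | v ∈ P} = #{w ∈ G | v ∈ pathVH u w} := by
    rw [filter_image, card_image_of_injective _ (pathVH_injective u)]
  have hshared : #({P ∈ G.image (pathHV u) | v ∈ P} ∩ {P ∈ G.image (pathVH u) | v ∈ P}) =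
      #{w ∈ G | (u.1 = w.1 ∨ u.2 = w.2) ∧ v ∈ pathHV u w} := by
    rw [← filter_inter_distrib, hinter, filter_image,
      card_image_of_injective _ (pathHV_injective u), filter_filter]
  rw [η, manhattanPaths, filter_union, ← hHV, ← hVH, ← hshared, card_union_add_card_inter]

def segmentEndsThrough (N b a : ℕ) : Finset ℕ := {c ∈ range N | a ∈ uIcc b c}

lemma card_segmentEndsThrough_self (N a : ℕ) : #(segmentEndsThrough N a a) = N := by
  rw [segmentEndsThrough, filter_true_of_mem fun c _ => left_mem_uIcc, card_range]

lemma card_segmentEndsThrough_of_lt {N a b : ℕ} (h : b < a) :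
    #(segmentEndsThrough N b a) = N - a := by
  rw [← Nat.card_Ico a N]
  congr 1
  ext c
  simp only [segmentEndsThrough, mem_filter, mem_range, mem_Ico, mem_uIcc']
  omega

lemma card_segmentEndsThrough_of_gt {N a b : ℕ} (h : a < b) (hb : b < N) :
    #(segmentEndsThrough N b a) = a + 1 := by
  rw [← card_range (a + 1)]
  congr 1
  ext c
  simp only [segmentEndsThrough, mem_filter, mem_range, mem_uIcc']
  omega

lemma card_filter_mem_pathHV {N : ℕ} (u : ℕ × ℕ) {v : ℕ × ℕ} (hv : v.1 < N) :
    #{w ∈ range N ×ˢ range N | v ∈ pathHV u w} =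
      if v.2 = u.2 then N * #(segmentEndsThrough N u.1 v.1)
      else #(segmentEndsThrough N u.2 v.2) := by
  split_ifs with h
  · suffices {w ∈ range N ×ˢ range N | v ∈ pathHV u w} =
        segmentEndsThrough N u.1 v.1 ×ˢ range N by
      rw [this, card_product, card_range, mul_comm]
    ext ⟨a, b⟩
    simp only [mem_filter, mem_product, mem_range, mem_pathHV, segmentEndsThrough, h, mem_uIcc',
      and_true]
    omega
  · suffices {w ∈ range N ×ˢ range N | v ∈ pathHV u w} =
        {v.1} ×ˢ segmentEndsThrough N u.2 v.2 by
      rw [this, card_product, card_singleton, one_mul]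
    ext ⟨a, b⟩
    simp only [mem_filter, mem_product, mem_range, mem_singleton, mem_pathHV, segmentEndsThrough,
      mem_uIcc']
    omega

lemma card_filter_mem_pathVH {N : ℕ} (u : ℕ × ℕ) {v : ℕ × ℕ} (hv : v.2 < N) :
    #{w ∈ range N ×ˢ range N | v ∈ pathVH u w} =
      if v.1 = u.1 then N * #(segmentEndsThrough N u.2 v.2)
      else #(segmentEndsThrough N u.1 v.1) := by
  have hswap : #{w ∈ range N ×ˢ range N | v ∈ pathVH u w} =
      #{w ∈ range N ×ˢ range N | v.swap ∈ pathHV u.swap w} := by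
    refine card_nbij' Prod.swap Prod.swap ?_ ?_ (fun w _ => w.swap_swap) (fun w _ => w.swap_swap)
    all_goals
      intro w hw
      simp only [coe_filter, mem_product, mem_range, Set.mem_ofPred_eq, mem_pathVH,
        Prod.fst_swap, Prod.snd_swap, Prod.swap_swap] at hw ⊢
      exact ⟨hw.1.symm, hw.2⟩
  exact hswap.trans (card_filter_mem_pathHV u.swap hv)

lemma card_filter_fst_eq_or_snd_eq {N : ℕ} {u : ℕ × ℕ} (hu₁ : u.1 < N) (hu₂ : u.2 < N) :
    #{w ∈ range N ×ˢ range N | u.1 = w.1 ∨ u.2 = w.2} = 2 * N - 1 := by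
  have hcross : {w ∈ range N ×ˢ range N | u.1 = w.1 ∨ u.2 = w.2} =
      {u.1} ×ˢ range N ∪ range N ×ˢ {u.2} := by
    ext ⟨a, b⟩
    simp only [mem_filter, mem_union, mem_product, mem_range, mem_singleton]
    omega
  have hcenter : {u.1} ×ˢ range N ∩ range N ×ˢ {u.2} = {u} := by
    ext ⟨a, b⟩
    simp only [mem_inter, mem_product, mem_range, mem_singleton, Prod.ext_iff]
    omega
  have h := card_union_add_card_inter ({u.1} ×ˢ range N) (range N ×ˢ {u.2})
  rw [hcenter, card_singleton, card_product, card_product, card_singleton, card_singleton,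
    card_range] at h
  rw [hcross]
  omega

lemma card_filter_shared_mem_pathHV {N : ℕ} {u v : ℕ × ℕ} (hv₁ : v.1 < N) (hv₂ : v.2 < N) :
    #{w ∈ range N ×ˢ range N | (u.1 = w.1 ∨ u.2 = w.2) ∧ v ∈ pathHV u w} =
      if v.1 = u.1 then
        if v.2 = u.2 then 2 * N - 1 else #(segmentEndsThrough N u.2 v.2)
      else if v.2 = u.2 then #(segmentEndsThrough N u.1 v.1) else 0 := by
  split_ifs with h₁ h₂ h₂
  · obtain rfl : v = u := Prod.ext h₁ h₂
    rw [← card_filter_fst_eq_or_snd_eq hv₁ hv₂]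
    congr 1
    exact filter_congr fun w _ => and_iff_left (mem_pathHV.2 (Or.inl ⟨left_mem_uIcc, rfl⟩))
  · suffices {w ∈ range N ×ˢ range N | (u.1 = w.1 ∨ u.2 = w.2) ∧ v ∈ pathHV u w} =
        {u.1} ×ˢ segmentEndsThrough N u.2 v.2 by
      rw [this, card_product, card_singleton, one_mul]
    ext ⟨a, b⟩
    simp only [mem_filter, mem_product, mem_range, mem_singleton, mem_pathHV, segmentEndsThrough,
      mem_uIcc']
    omega
  · suffices {w ∈ range N ×ˢ range N | (u.1 = w.1 ∨ u.2 = w.2) ∧ v ∈ pathHV u w} =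
        segmentEndsThrough N u.1 v.1 ×ˢ {u.2} by
      rw [this, card_product, card_singleton, mul_one]
    ext ⟨a, b⟩
    simp only [mem_filter, mem_product, mem_range, mem_singleton, mem_pathHV, segmentEndsThrough,
      mem_uIcc']
    omega
  · rw [card_eq_zero, filter_eq_empty_iff]
    intro w _
    simp only [mem_pathHV, mem_uIcc']
    omega

lemma η_eq_ite {N : ℕ} (u : ℕ × ℕ) {v : ℕ × ℕ} (hv₁ : v.1 < N) (hv₂ : v.2 < N) :
    η N u v =
      if v.1 = u.1 then
        if v.2 = u.2 then 2 * N ^ 2 - 2 * N + 1 else N * #(segmentEndsThrough N u.2 v.2)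
      else if v.2 = u.2 then N * #(segmentEndsThrough N u.1 v.1)
      else #(segmentEndsThrough N u.1 v.1) + #(segmentEndsThrough N u.2 v.2) := by
  have h := η_add_card_shared N u v
  rw [card_filter_shared_mem_pathHV hv₁ hv₂, card_filter_mem_pathHV u hv₁,
    card_filter_mem_pathVH u hv₂] at h
  split_ifs at h ⊢ with h₁ h₂
  · simp only [← h₁, ← h₂, card_segmentEndsThrough_self] at h
    have : N ≤ N * N := Nat.le_mul_self N
    rw [sq]
    omega
  all_goals omega

/-- The case formula for the number of one-corner Manhattan paths on the
`N × N` grid starting at `(i', j')` and visiting `(i, j)`. -/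
theorem manhattan_eta_formula (N i j i' j' : ℕ)
    (hi : i < N) (hj : j < N) (hi' : i' < N) (hj' : j' < N) :
    (η N (i', j') (i, j) : ℤ) =
      if i' < i ∧ j' < j then 2 * N - i - j
      else if i < i' ∧ j < j' then i + j + 2
      else if i' < i ∧ j < j' then N + 1 - i + j
      else if i < i' ∧ j' < j then N + 1 + i - j
      else if i' = i ∧ j' < j then N ^ 2 - N * j
      else if i' < i ∧ j' = j then N ^ 2 - N * i
      else if i' = i ∧ j < j' then N + N * j
      else if i < i' ∧ j' = j then N + N * i
      else 2 * N ^ 2 - 2 * N + 1 := by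
  -- the right-hand side elaborates as the cast of a natural-number `if` (truncated subtraction)
  norm_cast
  rw [η_eq_ite (i', j') (v := (i, j)) hi hj]
  dsimp only
  rcases lt_trichotomy i' i with h₁ | h₁ | h₁ <;> rcases lt_trichotomy j' j with h₂ | h₂ | h₂ <;>
    simp (disch := omega) only [if_pos, if_neg, card_segmentEndsThrough_of_lt,
      card_segmentEndsThrough_of_gt] <;>
    first | omega | rw [Nat.mul_sub, sq] | ring
end

section
/- The limiting spatial density of the Manhattan Random Way-Point on the square [0, L]²: writing s_ε(i, j) = 3((4N²−6N+2)(i+j) − (4N−2)(i²+j²) + 6N²−8N+3)/((N⁴−N²)(4N−2)) with N = ⌈L/ε⌉, i = ⌊(N/L)x⌋, j = ⌊(N/L)y⌋, then lim_{ε→0} (N/L)² · s_ε(⌊(N/L)x⌋, ⌊(N/L)y⌋) = (3/L³)(x + y) − (3/L⁴)(x² + y²) for every (x, y) in the open square (0, L)². -/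
/-!
Dividing numerator and denominator of `s(N, i, j)` by `N⁴` shows that `N² · s(N, i, j)` is a
rational function of `(1/N, i/N, j/N)` which is continuous at `1/N = 0`, where it equals
`3(a + b) − 3(a² + b²)` with `a = i/N`, `b = j/N`. Along `i = ⌊N a⌋`, `j = ⌊N b⌋` we have
`i/N → a`, `j/N → b`, and `N = ⌈L/ε⌉ → ∞` as `ε → 0⁺`; taking `a = x/L`, `b = y/L` and
dividing by `L²` gives the limit.
-/

open Filter Topology

theorem tendsto_natCeil_div_nhdsGT_zero {𝕜 : Type*} [Field 𝕜] [LinearOrder 𝕜]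
    [IsStrictOrderedRing 𝕜] [TopologicalSpace 𝕜] [OrderTopology 𝕜] [FloorSemiring 𝕜]
    {L : 𝕜} (hL : 0 < L) :
    Tendsto (fun ε : 𝕜 => ⌈L / ε⌉₊) (𝓝[>] 0) atTop :=
  tendsto_nat_ceil_atTop.comp <|
    (tendsto_inv_nhdsGT_zero.const_mul_atTop hL).congr fun ε => (div_eq_mul_inv L ε).symm

namespace ManhattanMTM

noncomputable def stationary (N i j : ℝ) : ℝ :=
  3 * ((4 * N ^ 2 - 6 * N + 2) * (i + j) - (4 * N - 2) * (i ^ 2 + j ^ 2)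
      + 6 * N ^ 2 - 8 * N + 3) /
    ((N ^ 4 - N ^ 2) * (4 * N - 2))

noncomputable def scaledStationary (t a b : ℝ) : ℝ :=
  3 * ((4 - 6 * t + 2 * t ^ 2) * (a + b) - (4 - 2 * t) * (a ^ 2 + b ^ 2)
      + t * (6 - 8 * t + 3 * t ^ 2)) /
    ((1 - t ^ 2) * (4 - 2 * t))

theorem sq_mul_stationary {N : ℝ} (hN : 1 < N) (i j : ℝ) :
    N ^ 2 * stationary N i j = scaledStationary N⁻¹ (i / N) (j / N) := by
  have hN₀ : N ≠ 0 := by positivity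
  have hN₁ : N ^ 4 - N ^ 2 ≠ 0 :=
    (sub_pos.2 (pow_lt_pow_right₀ hN (by norm_num : 2 < 4))).ne'
  have hN₂ : 4 * N - 2 ≠ 0 := by linarith
  have ht : N⁻¹ < 1 := inv_lt_one_of_one_lt₀ hN
  have ht₁ : 1 - N⁻¹ ^ 2 ≠ 0 := by nlinarith [inv_pos.2 (zero_lt_one.trans hN)]
  have ht₂ : 4 - 2 * N⁻¹ ≠ 0 := by linarith
  unfold stationary scaledStationary
  field_simp
  ring

theorem scaledStationary_zero (a b : ℝ) :
    scaledStationary 0 a b = 3 * (a + b) - 3 * (a ^ 2 + b ^ 2) := by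
  unfold scaledStationary
  ring

theorem continuousAt_scaledStationary (a b : ℝ) :
    ContinuousAt (fun p : ℝ × ℝ × ℝ => scaledStationary p.1 p.2.1 p.2.2) (0, a, b) :=
  ContinuousAt.div (by fun_prop) (by fun_prop) (by norm_num)

theorem tendsto_sq_mul_stationary_floor {a b : ℝ} (ha : 0 ≤ a) (hb : 0 ≤ b) :
    Tendsto (fun N : ℕ => (N : ℝ) ^ 2 * stationary N ⌊N * a⌋₊ ⌊N * b⌋₊) atTop
      (𝓝 (3 * (a + b) - 3 * (a ^ 2 + b ^ 2))) := by
  have hfloor {c : ℝ} (hc : 0 ≤ c) :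
      Tendsto (fun N : ℕ => (⌊(N : ℝ) * c⌋₊ : ℝ) / N) atTop (𝓝 c) := by
    simpa only [Function.comp_def, mul_comm] using
      (tendsto_nat_floor_mul_div_atTop hc).comp tendsto_natCast_atTop_atTop
  have hinv : Tendsto (fun N : ℕ => (N : ℝ)⁻¹) atTop (𝓝 0) :=
    tendsto_inv_atTop_zero.comp tendsto_natCast_atTop_atTop
  rw [← scaledStationary_zero]
  refine ((continuousAt_scaledStationary a b).tendsto.comp
    (hinv.prodMk_nhds ((hfloor ha).prodMk_nhds (hfloor hb)))).congr' ?_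
  filter_upwards [eventually_gt_atTop 1] with N hN
  exact (sq_mul_stationary (Nat.one_lt_cast.mpr hN) _ _).symm

end ManhattanMTM

theorem manhattan_spatial_density_limit_general (L x y : ℝ) (hL : 0 < L)
    (hx0 : 0 < x) (hy0 : 0 < y) :
    Tendsto (fun ε : ℝ =>
        ((⌈L / ε⌉₊ : ℝ) / L) ^ 2 *
          (3 * ((4 * (⌈L / ε⌉₊ : ℝ) ^ 2 - 6 * (⌈L / ε⌉₊ : ℝ) + 2) *
                ((⌊(⌈L / ε⌉₊ : ℝ) * x / L⌋₊ : ℝ) + (⌊(⌈L / ε⌉₊ : ℝ) * y / L⌋₊ : ℝ))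
              - (4 * (⌈L / ε⌉₊ : ℝ) - 2) *
                ((⌊(⌈L / ε⌉₊ : ℝ) * x / L⌋₊ : ℝ) ^ 2 + (⌊(⌈L / ε⌉₊ : ℝ) * y / L⌋₊ : ℝ) ^ 2)
              + 6 * (⌈L / ε⌉₊ : ℝ) ^ 2 - 8 * (⌈L / ε⌉₊ : ℝ) + 3) /
            (((⌈L / ε⌉₊ : ℝ) ^ 4 - (⌈L / ε⌉₊ : ℝ) ^ 2) * (4 * (⌈L / ε⌉₊ : ℝ) - 2))))
      (nhdsWithin 0 (Set.Ioi 0))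
      (nhds (3 / L ^ 3 * (x + y) - 3 / L ^ 4 * (x ^ 2 + y ^ 2))) := by
  have hlim := ((ManhattanMTM.tendsto_sq_mul_stationary_floor (div_nonneg hx0.le hL.le)
    (div_nonneg hy0.le hL.le)).comp
      (tendsto_natCeil_div_nhdsGT_zero hL)).const_mul (L ^ 2)⁻¹
  convert hlim using 2
  · simp only [Function.comp_apply, ManhattanMTM.stationary, mul_div_assoc, div_pow]
    ring
  · field_simp

/-- The rescaled discrete spatial distribution of the Manhattan MTM
converges, as the resolution `ε → 0⁺`, to the continuous spatial density
`(3/L³)(x + y) − (3/L⁴)(x² + y²)` at every interior point `(x, y)` of `(0, L)²`.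
Here `N = ⌈L/ε⌉`, `i = ⌊Nx/L⌋`, `j = ⌊Ny/L⌋`, and
`s_ε(i,j) = 3((4N²−6N+2)(i+j) − (4N−2)(i²+j²) + 6N²−8N+3)/((N⁴−N²)(4N−2))`. -/
theorem manhattan_spatial_density_limit (L x y : ℝ) (hL : 0 < L)
    (hx0 : 0 < x) (hxL : x < L) (hy0 : 0 < y) (hyL : y < L) :
    Tendsto (fun ε : ℝ =>
        ((⌈L / ε⌉₊ : ℝ) / L) ^ 2 *
          (3 * ((4 * (⌈L / ε⌉₊ : ℝ) ^ 2 - 6 * (⌈L / ε⌉₊ : ℝ) + 2) *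
                ((⌊(⌈L / ε⌉₊ : ℝ) * x / L⌋₊ : ℝ) + (⌊(⌈L / ε⌉₊ : ℝ) * y / L⌋₊ : ℝ))
              - (4 * (⌈L / ε⌉₊ : ℝ) - 2) *
                ((⌊(⌈L / ε⌉₊ : ℝ) * x / L⌋₊ : ℝ) ^ 2 + (⌊(⌈L / ε⌉₊ : ℝ) * y / L⌋₊ : ℝ) ^ 2)
              + 6 * (⌈L / ε⌉₊ : ℝ) ^ 2 - 8 * (⌈L / ε⌉₊ : ℝ) + 3) /
            (((⌈L / ε⌉₊ : ℝ) ^ 4 - (⌈L / ε⌉₊ : ℝ) ^ 2) * (4 * (⌈L / ε⌉₊ : ℝ) - 2))))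
      (nhdsWithin 0 (Set.Ioi 0))
      (nhds (3 / L ^ 3 * (x + y) - 3 / L ^ 4 * (x ^ 2 + y ^ 2))) :=
  manhattan_spatial_density_limit_general L x y hL hx0 hy0
end
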